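/- arXiv:1606.07157 — 3 statements merged into one kernel-verified Lean document; each statement's English description precedes it below -/
import Mathlib

section
/- Let G_k be the k×k grid with k ≥ 2. Call X ⊆ V(G_k) small if mm(X) < k and X contains no full row. If mm(X) < k, then X is small or the complement of X is small. -/
open SimpleGraph

/-- Size of a maximum matching in the bipartite graph of edges of `G` crossing `(A, Aᶜ)`. -/
noncomputable def mmVal {V : Type*} (G : SimpleGraph V) (A : Set V) : ℕ :=
  sSup {n | ∃ M : Finset (V × V),
    (∀ p ∈ M, p.1 ∈ A ∧ p.2 ∉ A ∧ G.Adj p.1 p.2) ∧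
    (∀ p ∈ M, ∀ q ∈ M, p ≠ q → p.1 ≠ q.1 ∧ p.2 ≠ q.2) ∧ M.card = n}

/-- A branch-decomposition over the vertex set of `G`: a finite subcubic tree together with a
bijection between its leaves and the vertices of `G`. -/
structure BranchDecomp {V : Type*} (G : SimpleGraph V) where
  B : Type
  finB : Finite B
  T : SimpleGraph B
  isTree : T.IsTree
  subcubic : ∀ b : B, (T.neighborSet b).ncard = 1 ∨ (T.neighborSet b).ncard = 3
  L : {b : B // (T.neighborSet b).ncard = 1} ≃ V

/-- The set of vertices of `G` whose leaves lie on the `u`-side of the tree edge `uw`. -/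
noncomputable def BranchDecomp.side {V : Type*} {G : SimpleGraph V} (D : BranchDecomp G)
    (u w : D.B) : Set V :=
  {x : V | (D.T.deleteEdges {s(u, w)}).Reachable (D.L.symm x).1 u}

/-- The width of a branch-decomposition is at most `k`. -/
def BranchDecomp.widthLE {V : Type*} {G : SimpleGraph V} (D : BranchDecomp G) (k : ℕ) : Prop :=
  ∀ u w : D.B, D.T.Adj u w → mmVal G (D.side u w) ≤ k

/-- The maximum matching width of `G`. -/
noncomputable def mmw {V : Type*} (G : SimpleGraph V) : ℕ :=
  sInf {k | ∃ D : BranchDecomp G, D.widthLE k}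
/-- `H` is a minor of `G`: there is a family of nonempty, pairwise disjoint, connected branch
sets in `G` indexed by the vertices of `H`, with edges of `H` realized by edges of `G`. -/
def IsMinor {W : Type*} {V : Type*} (H : SimpleGraph W) (G : SimpleGraph V) : Prop :=
  ∃ φ : W → Set V,
    (∀ w, (φ w).Nonempty) ∧
    (∀ w, (G.induce (φ w)).Connected) ∧
    (∀ w w', w ≠ w' → Disjoint (φ w) (φ w')) ∧
    (∀ w w', H.Adj w w' → ∃ a ∈ φ w, ∃ b ∈ φ w', G.Adj a b)

/-- The `k × k` grid graph: vertices `(i, j)`, edges between vertices at Manhattan distance 1. -/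
def gridGraph (k : ℕ) : SimpleGraph (Fin k × Fin k) :=
  SimpleGraph.fromRel (fun p q =>
    (p.1 = q.1 ∧ (p.2 : ℕ) + 1 = (q.2 : ℕ)) ∨ (p.2 = q.2 ∧ (p.1 : ℕ) + 1 = (q.1 : ℕ)))

/-- The row `R_j` of the `k × k` grid. -/
def gridRow (k : ℕ) (j : Fin k) : Set (Fin k × Fin k) := {p | p.2 = j}

/-- The column `C_i` of the `k × k` grid. -/
def gridCol (k : ℕ) (i : Fin k) : Set (Fin k × Fin k) := {p | p.1 = i}

/-- `X` is small: `mm(X) < k` and `X` contains no full row. -/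
def GridSmall (k : ℕ) (X : Set (Fin k × Fin k)) : Prop :=
  mmVal (gridGraph k) X < k ∧ ∀ j : Fin k, ¬ gridRow k j ⊆ X

/-- `G` is `k`-connected: `|V(G)| ≥ k` and deleting fewer than `k` vertices leaves `G`
connected. -/
def KConnected {V : Type*} (k : ℕ) (G : SimpleGraph V) : Prop :=
  k ≤ Nat.card V ∧ ∀ X : Set V, X.ncard < k → (G.induce Xᶜ).Connected

/-- A block of `G`: a bridge (with its two endpoints), or a maximal 2-connected induced
subgraph. -/
def IsBlock {V : Type*} (G : SimpleGraph V) (Bs : Set V) : Prop :=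
  (∃ a b : V, G.Adj a b ∧ G.IsBridge s(a, b) ∧ Bs = {a, b}) ∨
  (KConnected 2 (G.induce Bs) ∧
    ∀ B' : Set V, Bs ⊆ B' → KConnected 2 (G.induce B') → B' = Bs)

/-- A tree-representation of `G`: a finite subcubic tree `T` and nontrivial subtrees `F x`
for each vertex `x` such that adjacent vertices have intersecting subtrees. -/
structure TreeRep {V : Type*} (G : SimpleGraph V) where
  B : Type
  finB : Finite B
  T : SimpleGraph B
  isTree : T.IsTree
  subcubic : ∀ b : B, (T.neighborSet b).ncard = 1 ∨ (T.neighborSet b).ncard = 3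
  F : V → Set B
  nontrivial : ∀ x : V, ∃ u w : B, u ∈ F x ∧ w ∈ F x ∧ T.Adj u w
  subtree : ∀ x : V, (T.induce (F x)).Connected
  adjMeet : ∀ x y : V, G.Adj x y → (F x ∩ F y).Nonempty

/-- Every edge of the tree lies in at most `k` of the subtrees. -/
def TreeRep.widthLE {V : Type*} {G : SimpleGraph V} (R : TreeRep G) (k : ℕ) : Prop :=
  ∀ u w : R.B, R.T.Adj u w → {x : V | u ∈ R.F x ∧ w ∈ R.F x}.ncard ≤ k

/-- Contraction of the edge `uv` of `G` (the merged vertex is `u`). -/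
def contractEdge {V : Type*} (G : SimpleGraph V) (u v : V) : SimpleGraph {x : V // x ≠ v} :=
  SimpleGraph.fromRel (fun x y =>
    G.Adj x.1 y.1 ∨ (x.1 = u ∧ G.Adj v y.1) ∨ (y.1 = u ∧ G.Adj v x.1))

lemma mmSet_compl_subset {V : Type*} (G : SimpleGraph V) (A : Set V) :
    {n | ∃ M : Finset (V × V),
    (∀ p ∈ M, p.1 ∈ A ∧ p.2 ∉ A ∧ G.Adj p.1 p.2) ∧
    (∀ p ∈ M, ∀ q ∈ M, p ≠ q → p.1 ≠ q.1 ∧ p.2 ≠ q.2) ∧ M.card = n} ⊆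
    {n | ∃ M : Finset (V × V),
    (∀ p ∈ M, p.1 ∈ Aᶜ ∧ p.2 ∉ Aᶜ ∧ G.Adj p.1 p.2) ∧
    (∀ p ∈ M, ∀ q ∈ M, p ≠ q → p.1 ≠ q.1 ∧ p.2 ≠ q.2) ∧ M.card = n} := by
  rintro n ⟨M, h1, h2, h3⟩
  refine ⟨M.map ⟨Prod.swap, Prod.swap_injective⟩, ?_, ?_, ?_⟩
  · rintro p hp
    rw [Finset.mem_map] at hp
    obtain ⟨q, hq, rfl⟩ := hp
    obtain ⟨ha, hb, hadj⟩ := h1 q hq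
    exact ⟨hb, by simpa using ha, hadj.symm⟩
  · rintro p hp q hq hne
    rw [Finset.mem_map] at hp hq
    obtain ⟨p', hp', rfl⟩ := hp
    obtain ⟨q', hq', rfl⟩ := hq
    have := h2 p' hp' q' hq' (by rintro rfl; exact hne rfl)
    exact ⟨this.2, this.1⟩
  · rw [Finset.card_map]; exact h3

lemma mmVal_compl {V : Type*} (G : SimpleGraph V) (A : Set V) :
    mmVal G Aᶜ = mmVal G A := by
  unfold mmVal
  congr 1
  apply le_antisymm
  · have := mmSet_compl_subset G Aᶜ
    rwa [compl_compl] at this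
  · exact mmSet_compl_subset G A

lemma nat_ivt (P : ℕ → Prop) : ∀ n m, m ≤ n → P m → ¬ P n →
    ∃ a, m ≤ a ∧ a + 1 ≤ n ∧ P a ∧ ¬ P (a + 1) := by
  intro n
  induction n with
  | zero =>
    intro m hm hP hnP
    obtain rfl := Nat.le_zero.mp hm
    exact absurd hP hnP
  | succ n ih =>
    intro m hm hP hnP
    by_cases hPn : P n
    · have hne : m ≠ n + 1 := fun h => hnP (h ▸ hP)
      have hmn : m ≤ n := by omega
      exact ⟨n, hmn, le_refl _, hPn, hnP⟩
    · have hne : m ≠ n + 1 := fun h => hnP (h ▸ hP)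
      have hmn : m ≤ n := by omega
      obtain ⟨a, h1, h2, h3, h4⟩ := ih m hmn hP hPn
      exact ⟨a, h1, by omega, h3, h4⟩

/-- if `mm(X) < k` then `X` or its complement is small. -/
theorem grid_small_or_compl_small (k : ℕ) (hk : 2 ≤ k) (X : Set (Fin k × Fin k))
    (hX : mmVal (gridGraph k) X < k) : GridSmall k X ∨ GridSmall k Xᶜ := by
  by_contra hcon
  push_neg at hcon
  obtain ⟨h1, h2⟩ := hcon
  have hXc : mmVal (gridGraph k) Xᶜ < k := by rw [mmVal_compl]; exact hX
  have hrow1 : ∃ j, gridRow k j ⊆ X := by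
    by_contra h
    push_neg at h
    exact h1 ⟨hX, h⟩
  have hrow2 : ∃ j, gridRow k j ⊆ Xᶜ := by
    by_contra h
    push_neg at h
    exact h2 ⟨hXc, h⟩
  obtain ⟨j, hj⟩ := hrow1
  obtain ⟨j', hj'⟩ := hrow2
  have hcol : ∀ i : Fin k, ∃ p : (Fin k × Fin k) × (Fin k × Fin k),
      p.1 ∈ X ∧ p.2 ∉ X ∧ (gridGraph k).Adj p.1 p.2 ∧ p.1.1 = i ∧ p.2.1 = i := by
    intro i
    have hjX : (i, j) ∈ X := hj rfl
    have hj'X : (i, j') ∉ X := hj' rfl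
    rcases lt_or_ge (j : ℕ) (j' : ℕ) with hlt | hle
    · obtain ⟨a, ha1, ha2, ha3, ha4⟩ :=
        nat_ivt (fun a => ∀ h : a < k, (i, (⟨a, h⟩ : Fin k)) ∈ X) j' j (le_of_lt hlt)
          (fun _ => hjX) (fun hP => hj'X (hP j'.isLt))
      have hak1 : a + 1 < k := lt_of_le_of_lt ha2 j'.isLt
      have hak : a < k := Nat.lt_of_succ_lt hak1
      have hout : (i, (⟨a + 1, hak1⟩ : Fin k)) ∉ X := by
        intro hmem
        apply ha4
        intro h
        exact hmem
      refine ⟨((i, ⟨a, hak⟩), (i, ⟨a + 1, hak1⟩)), ha3 hak, hout, ?_, rfl, rfl⟩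
      rw [gridGraph, SimpleGraph.fromRel_adj]
      refine ⟨?_, Or.inl (Or.inl ⟨rfl, rfl⟩)⟩
      simp [Prod.ext_iff, Fin.ext_iff]
    · have hne : (j' : ℕ) ≠ (j : ℕ) := by
        intro h
        exact hj'X (by rwa [show j' = j from Fin.ext h])
      obtain ⟨a, ha1, ha2, ha3, ha4⟩ :=
        nat_ivt (fun a => ∀ h : a < k, (i, (⟨a, h⟩ : Fin k)) ∉ X) j j' (by omega)
          (fun _ => hj'X) (fun hP => hP j.isLt hjX)
      have hak1 : a + 1 < k := lt_of_le_of_lt ha2 j.isLt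
      have hak : a < k := Nat.lt_of_succ_lt hak1
      have hmem1 : (i, (⟨a + 1, hak1⟩ : Fin k)) ∈ X := by
        by_contra hmem
        apply ha4
        intro h
        exact hmem
      refine ⟨((i, ⟨a + 1, hak1⟩), (i, ⟨a, hak⟩)), hmem1, ha3 hak, ?_, rfl, rfl⟩
      have : (gridGraph k).Adj (i, ⟨a, hak⟩) (i, ⟨a + 1, hak1⟩) := by
        rw [gridGraph, SimpleGraph.fromRel_adj]
        refine ⟨?_, Or.inl (Or.inl ⟨rfl, rfl⟩)⟩
        simp [Prod.ext_iff, Fin.ext_iff]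
      exact this.symm
  choose e he1 he2 he3 he4 he5 using hcol
  have heinj : Function.Injective e := by
    intro i i' h
    rw [← he4 i, ← he4 i', h]
  set M : Finset ((Fin k × Fin k) × (Fin k × Fin k)) := Finset.univ.image e with hM
  have hcard : M.card = k := by
    rw [hM, Finset.card_image_of_injective _ heinj, Finset.card_univ, Fintype.card_fin]
  have hkmem : k ∈ {n | ∃ M : Finset ((Fin k × Fin k) × (Fin k × Fin k)),
      (∀ p ∈ M, p.1 ∈ X ∧ p.2 ∉ X ∧ (gridGraph k).Adj p.1 p.2) ∧
      (∀ p ∈ M, ∀ q ∈ M, p ≠ q → p.1 ≠ q.1 ∧ p.2 ≠ q.2) ∧ M.card = n} := by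
    refine ⟨M, ?_, ?_, hcard⟩
    · intro p hp
      rw [hM, Finset.mem_image] at hp
      obtain ⟨i, _, rfl⟩ := hp
      exact ⟨he1 i, he2 i, he3 i⟩
    · intro p hp q hq hpq
      rw [hM, Finset.mem_image] at hp hq
      obtain ⟨i, _, rfl⟩ := hp
      obtain ⟨i', _, rfl⟩ := hq
      have hii : i ≠ i' := by rintro rfl; exact hpq rfl
      constructor
      · intro h
        exact hii (by rw [← he4 i, ← he4 i', h])
      · intro h
        exact hii (by rw [← he5 i, ← he5 i', h])
  have hbdd : BddAbove {n | ∃ M : Finset ((Fin k × Fin k) × (Fin k × Fin k)),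
      (∀ p ∈ M, p.1 ∈ X ∧ p.2 ∉ X ∧ (gridGraph k).Adj p.1 p.2) ∧
      (∀ p ∈ M, ∀ q ∈ M, p ≠ q → p.1 ≠ q.1 ∧ p.2 ≠ q.2) ∧ M.card = n} := by
    refine ⟨Fintype.card (Fin k × Fin k), ?_⟩
    rintro n ⟨N, hN1, hN2, rfl⟩
    have hinj : Set.InjOn Prod.fst (N : Set ((Fin k × Fin k) × (Fin k × Fin k))) := by
      intro p hp q hq h
      by_contra hne
      exact (hN2 p hp q hq hne).1 h
    calc N.card = (N.image Prod.fst).card := (Finset.card_image_of_injOn hinj).symm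
      _ ≤ Fintype.card (Fin k × Fin k) := Finset.card_le_univ _
  have hfin : k ≤ mmVal (gridGraph k) X := le_csSup hbdd hkmem
  omega
end

section
/- Let G_k be the k×k grid with k ≥ 2. If X ⊆ V(G_k) is small (i.e., mm(X) < k and X contains no full row), then some row and some column of G_k are entirely disjoint from X. -/
open SimpleGraph

lemma exists_step {k : ℕ} (S : Set (Fin k)) {a b : Fin k} (ha : a ∈ S) (hb : b ∉ S) :
    ∃ i i' : Fin k, (i : ℕ) + 1 = (i' : ℕ) ∧ ((i ∈ S ∧ i' ∉ S) ∨ (i' ∈ S ∧ i ∉ S)) := by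
  by_contra h
  push_neg at h
  have hk0 : 0 < k := a.pos
  have key : ∀ n, ∀ hn : n < k, ((⟨n, hn⟩ : Fin k) ∈ S ↔ (⟨0, hk0⟩ : Fin k) ∈ S) := by
    intro n
    induction n with
    | zero => intro hn; exact Iff.rfl
    | succ m ih =>
      intro hn
      have hm : m < k := lt_trans (Nat.lt_succ_self m) hn
      have h2 := h ⟨m, hm⟩ ⟨m + 1, hn⟩ rfl
      constructor
      · intro hmem
        exact (ih hm).mp (h2.2 hmem)
      · intro h0
        exact h2.1 ((ih hm).mpr h0)
  have ha' := (key a.1 a.2).mp (by simpa using ha)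
  have hb' := (key b.1 b.2).mpr ha'
  exact hb (by simpa using hb')

lemma grid_adj_row {k : ℕ} {i i' j : Fin k} (h : (i : ℕ) + 1 = (i' : ℕ)) :
    (gridGraph k).Adj (i, j) (i', j) := by
  rw [gridGraph, SimpleGraph.fromRel_adj]
  refine ⟨?_, Or.inl (Or.inr ⟨rfl, h⟩)⟩
  intro hc
  have : (i : ℕ) = (i' : ℕ) := congrArg (fun p => ((Prod.fst p : Fin k) : ℕ)) hc
  omega

lemma grid_adj_col {k : ℕ} {i j j' : Fin k} (h : (j : ℕ) + 1 = (j' : ℕ)) :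
    (gridGraph k).Adj (i, j) (i, j') := by
  rw [gridGraph, SimpleGraph.fromRel_adj]
  refine ⟨?_, Or.inl (Or.inl ⟨rfl, h⟩)⟩
  intro hc
  have : (j : ℕ) = (j' : ℕ) := congrArg (fun p => ((Prod.snd p : Fin k) : ℕ)) hc
  omega

lemma mm_lb {k : ℕ} (X : Set (Fin k × Fin k)) (r : Fin k × Fin k → Fin k)
    (f : Fin k → (Fin k × Fin k) × (Fin k × Fin k))
    (h1 : ∀ j, (f j).1 ∈ X) (h2 : ∀ j, (f j).2 ∉ X)
    (h3 : ∀ j, (gridGraph k).Adj (f j).1 (f j).2)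
    (hr1 : ∀ j, r (f j).1 = j) (hr2 : ∀ j, r (f j).2 = j) :
    k ≤ mmVal (gridGraph k) X := by
  have hinj : Function.Injective f := by
    intro j j' hjj
    rw [← hr1 j, ← hr1 j', hjj]
  apply le_csSup
  · refine ⟨Fintype.card ((Fin k × Fin k) × (Fin k × Fin k)), ?_⟩
    rintro n ⟨M, _, _, rfl⟩
    exact le_trans (Finset.card_le_univ M) (le_of_eq Finset.card_univ)
  · refine ⟨Finset.image f Finset.univ, ?_, ?_, ?_⟩
    · intro p hp
      simp only [Finset.mem_image, Finset.mem_univ, true_and] at hp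
      obtain ⟨j, rfl⟩ := hp
      exact ⟨h1 j, h2 j, h3 j⟩
    · intro p hp q hq hpq
      simp only [Finset.mem_image, Finset.mem_univ, true_and] at hp hq
      obtain ⟨j, rfl⟩ := hp
      obtain ⟨j', rfl⟩ := hq
      have hne : j ≠ j' := fun h => hpq (by rw [h])
      constructor
      · intro h
        exact hne (by rw [← hr1 j, h, hr1 j'])
      · intro h
        exact hne (by rw [← hr2 j, h, hr2 j'])
    · rw [Finset.card_image_of_injective _ hinj, Finset.card_univ, Fintype.card_fin]

/-- a small set misses a full row and a full column. -/
theorem grid_small_misses_row_col (k : ℕ) (hk : 2 ≤ k) (X : Set (Fin k × Fin k))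
    (hX : GridSmall k X) :
    ∃ (j i : Fin k), gridRow k j ∩ X = ∅ ∧ gridCol k i ∩ X = ∅ := by
  obtain ⟨hmm, hrow⟩ := hX
  -- From the assumption that every row meets X (and no row is inside X), get a big matching.
  have rowbound : (∀ j : Fin k, (gridRow k j ∩ X).Nonempty) → k ≤ mmVal (gridGraph k) X := by
    intro hmeet
    have hchoice : ∀ j : Fin k, ∃ pq : (Fin k × Fin k) × (Fin k × Fin k),
        pq.1 ∈ X ∧ pq.2 ∉ X ∧ (gridGraph k).Adj pq.1 pq.2 ∧ pq.1.2 = j ∧ pq.2.2 = j := by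
      intro j
      obtain ⟨⟨pi, pj⟩, hpr, hpX⟩ := hmeet j
      have hpj : pj = j := hpr
      subst hpj
      obtain ⟨⟨qi, qj⟩, hqr, hqX⟩ := Set.not_subset.mp (hrow pj)
      have hqj : qj = pj := hqr
      subst hqj
      obtain ⟨i, i', hii, hcase⟩ :=
        exists_step {i : Fin k | (i, qj) ∈ X} (a := pi) (b := qi) hpX hqX
      rcases hcase with ⟨h1, h2⟩ | ⟨h1, h2⟩
      · exact ⟨((i, qj), (i', qj)), h1, h2, grid_adj_row hii, rfl, rfl⟩
      · exact ⟨((i', qj), (i, qj)), h1, h2, (grid_adj_row hii).symm, rfl, rfl⟩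
    choose f hf using hchoice
    exact mm_lb X Prod.snd f (fun j => (hf j).1) (fun j => (hf j).2.1)
      (fun j => (hf j).2.2.1) (fun j => (hf j).2.2.2.1) (fun j => (hf j).2.2.2.2)
  have colbound : (∀ i : Fin k, (gridCol k i ∩ X).Nonempty) → k ≤ mmVal (gridGraph k) X := by
    intro hmeet
    by_cases hc : ∃ i0 : Fin k, gridCol k i0 ⊆ X
    · obtain ⟨i0, hi0⟩ := hc
      exact rowbound (fun j => ⟨(i0, j), rfl, hi0 rfl⟩)
    · push_neg at hc
      have hchoice : ∀ i : Fin k, ∃ pq : (Fin k × Fin k) × (Fin k × Fin k),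
          pq.1 ∈ X ∧ pq.2 ∉ X ∧ (gridGraph k).Adj pq.1 pq.2 ∧ pq.1.1 = i ∧ pq.2.1 = i := by
        intro i
        obtain ⟨⟨pi, pj⟩, hpr, hpX⟩ := hmeet i
        have hpi : pi = i := hpr
        subst hpi
        obtain ⟨⟨qi, qj⟩, hqr, hqX⟩ := Set.not_subset.mp (hc pi)
        have hqi : qi = pi := hqr
        subst hqi
        obtain ⟨j, j', hjj, hcase⟩ :=
          exists_step {j : Fin k | (qi, j) ∈ X} (a := pj) (b := qj) hpX hqX
        rcases hcase with ⟨h1, h2⟩ | ⟨h1, h2⟩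
        · exact ⟨((qi, j), (qi, j')), h1, h2, grid_adj_col hjj, rfl, rfl⟩
        · exact ⟨((qi, j'), (qi, j)), h1, h2, (grid_adj_col hjj).symm, rfl, rfl⟩
      choose f hf using hchoice
      exact mm_lb X Prod.fst f (fun j => (hf j).1) (fun j => (hf j).2.1)
        (fun j => (hf j).2.2.1) (fun j => (hf j).2.2.2.1) (fun j => (hf j).2.2.2.2)
  have hjrow : ∃ j : Fin k, gridRow k j ∩ X = ∅ := by
    by_contra h
    push_neg at h
    exact absurd hmm (not_lt.mpr (rowbound fun j =>
      h j))
  have hicol : ∃ i : Fin k, gridCol k i ∩ X = ∅ := by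
    by_contra h
    push_neg at h
    exact absurd hmm (not_lt.mpr (colbound fun i =>
      h i))
  obtain ⟨j, hj⟩ := hjrow
  obtain ⟨i, hi⟩ := hicol
  exact ⟨j, i, hj, hi⟩
end

section
/- Let G be a graph with a vertex c of degree 2 whose neighbors a and b are adjacent. If mmw(G) ≥ 3, then mmw(G \ ab) ≥ 3, where G \ ab denotes G with the edge ab deleted. -/
open SimpleGraph

/-- If a crossing matching of `G` uses the edge `(a, b)`, we can reroute it through `c`
to obtain a crossing matching of the same size avoiding the edge `ab`. -/
lemma matching_transfer {V : Type} (G : SimpleGraph V) (a b c : V)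
    (hab : G.Adj a b) (hdeg : G.neighborSet c = {a, b}) (A : Set V)
    (M : Finset (V × V))
    (h1 : ∀ p ∈ M, p.1 ∈ A ∧ p.2 ∉ A ∧ G.Adj p.1 p.2)
    (h2 : ∀ p ∈ M, ∀ q ∈ M, p ≠ q → p.1 ≠ q.1 ∧ p.2 ≠ q.2)
    (hM : (a, b) ∈ M) :
    ∃ M' : Finset (V × V),
      (∀ p ∈ M', p.1 ∈ A ∧ p.2 ∉ A ∧ (G.deleteEdges {s(a, b)}).Adj p.1 p.2) ∧
      (∀ p ∈ M', ∀ q ∈ M', p ≠ q → p.1 ≠ q.1 ∧ p.2 ≠ q.2) ∧ M'.card = M.card := by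
  classical
  have hca : G.Adj c a := by
    have : a ∈ G.neighborSet c := by rw [hdeg]; exact Set.mem_insert _ _
    exact this
  have hcb : G.Adj c b := by
    have : b ∈ G.neighborSet c := by rw [hdeg]; exact Set.mem_insert_iff.2 (Or.inr rfl)
    exact this
  have hcnea : c ≠ a := hca.ne
  have hcneb : c ≠ b := hcb.ne
  have haneb : a ≠ b := hab.ne
  obtain ⟨haA, hbA, -⟩ := h1 _ hM
  -- pairs other than (a,b) are still edges after deleting ab
  have hold : ∀ p ∈ M, p ≠ (a, b) → (G.deleteEdges {s(a, b)}).Adj p.1 p.2 := by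
    intro p hp hpne
    obtain ⟨hpA, hpA', hpadj⟩ := h1 p hp
    rw [SimpleGraph.deleteEdges_adj]
    refine ⟨hpadj, ?_⟩
    intro h
    rw [Set.mem_singleton_iff, Sym2.eq_iff] at h
    rcases h with ⟨h1', h2'⟩ | ⟨h1', h2'⟩
    · exact hpne (Prod.ext_iff.mpr ⟨h1', h2'⟩)
    · exact hbA (h1' ▸ hpA)
  by_cases hcA : c ∈ A
  · -- replace (a, b) by (c, b)
    have key : ∀ p ∈ M, p ≠ (a, b) → p.1 ≠ c ∧ p.2 ≠ b := by
      intro p hp hpne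
      have hd := h2 p hp (a, b) hM hpne
      refine ⟨?_, hd.2⟩
      intro h
      obtain ⟨hpA, hpA', hpadj⟩ := h1 p hp
      have hmem : p.2 ∈ G.neighborSet c := by rw [← h]; exact hpadj
      rw [hdeg] at hmem
      rcases hmem with h' | h'
      · exact hpA' (h' ▸ haA)
      · exact hd.2 h'
    have hcbM : (c, b) ∉ M.erase (a, b) := by
      intro h
      have hmem := Finset.mem_of_mem_erase h
      have hne : ((c, b) : V × V) ≠ (a, b) := by
        intro h'; exact hcnea (congrArg Prod.fst h')
      exact (key _ hmem hne).1 rfl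
    refine ⟨insert (c, b) (M.erase (a, b)), ?_, ?_, ?_⟩
    · intro p hp
      rcases Finset.mem_insert.1 hp with rfl | hp'
      · refine ⟨hcA, hbA, ?_⟩
        rw [SimpleGraph.deleteEdges_adj]
        refine ⟨hcb, ?_⟩
        intro h
        rw [Set.mem_singleton_iff, Sym2.eq_iff] at h
        rcases h with ⟨h1', _⟩ | ⟨h1', _⟩
        · exact hcnea h1'
        · exact hcneb h1'
      · obtain ⟨hpA, hpA', -⟩ := h1 p (Finset.mem_of_mem_erase hp')
        exact ⟨hpA, hpA',
          hold p (Finset.mem_of_mem_erase hp') (Finset.ne_of_mem_erase hp')⟩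
    · intro p hp q hq hpq
      rcases Finset.mem_insert.1 hp with rfl | hp' <;>
        rcases Finset.mem_insert.1 hq with rfl | hq'
      · exact absurd rfl hpq
      · have hk := key q (Finset.mem_of_mem_erase hq') (Finset.ne_of_mem_erase hq')
        exact ⟨fun h => hk.1 h.symm, fun h => hk.2 h.symm⟩
      · exact key p (Finset.mem_of_mem_erase hp') (Finset.ne_of_mem_erase hp')
      · exact h2 p (Finset.mem_of_mem_erase hp') q (Finset.mem_of_mem_erase hq') hpq
    · rw [Finset.card_insert_of_notMem hcbM, Finset.card_erase_of_mem hM]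
      have : 0 < M.card := Finset.card_pos.2 ⟨_, hM⟩
      omega
  · -- replace (a, b) by (a, c)
    have key : ∀ p ∈ M, p ≠ (a, b) → p.1 ≠ a ∧ p.2 ≠ c := by
      intro p hp hpne
      have hd := h2 p hp (a, b) hM hpne
      refine ⟨hd.1, ?_⟩
      intro h
      obtain ⟨hpA, hpA', hpadj⟩ := h1 p hp
      have hmem : p.1 ∈ G.neighborSet c := by
        exact (h ▸ hpadj).symm
      rw [hdeg] at hmem
      rcases hmem with h' | h'
      · exact hd.1 h'
      · exact hbA (h' ▸ hpA)
    have hacM : (a, c) ∉ M.erase (a, b) := by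
      intro h
      have hmem := Finset.mem_of_mem_erase h
      have hne : ((a, c) : V × V) ≠ (a, b) := by
        intro h'; exact hcneb (congrArg Prod.snd h')
      exact (key _ hmem hne).1 rfl
    refine ⟨insert (a, c) (M.erase (a, b)), ?_, ?_, ?_⟩
    · intro p hp
      rcases Finset.mem_insert.1 hp with rfl | hp'
      · refine ⟨haA, hcA, ?_⟩
        rw [SimpleGraph.deleteEdges_adj]
        refine ⟨hca.symm, ?_⟩
        intro h
        rw [Set.mem_singleton_iff, Sym2.eq_iff] at h
        rcases h with ⟨_, h2'⟩ | ⟨h1', _⟩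
        · exact hcneb h2'
        · exact haneb h1'
      · obtain ⟨hpA, hpA', -⟩ := h1 p (Finset.mem_of_mem_erase hp')
        exact ⟨hpA, hpA',
          hold p (Finset.mem_of_mem_erase hp') (Finset.ne_of_mem_erase hp')⟩
    · intro p hp q hq hpq
      rcases Finset.mem_insert.1 hp with rfl | hp' <;>
        rcases Finset.mem_insert.1 hq with rfl | hq'
      · exact absurd rfl hpq
      · have hk := key q (Finset.mem_of_mem_erase hq') (Finset.ne_of_mem_erase hq')
        exact ⟨fun h => hk.1 h.symm, fun h => hk.2 h.symm⟩
      · exact key p (Finset.mem_of_mem_erase hp') (Finset.ne_of_mem_erase hp')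
      · exact h2 p (Finset.mem_of_mem_erase hp') q (Finset.mem_of_mem_erase hq') hpq
    · rw [Finset.card_insert_of_notMem hacM, Finset.card_erase_of_mem hM]
      have : 0 < M.card := Finset.card_pos.2 ⟨_, hM⟩
      omega

/-- Deleting the edge `ab` does not change any `mmVal`, for a degree-2 vertex `c` with
adjacent neighbors `a, b`. -/
lemma mmVal_deleteEdge_eq {V : Type} (G : SimpleGraph V) (a b c : V)
    (hab : G.Adj a b) (hdeg : G.neighborSet c = {a, b}) (A : Set V) :
    mmVal (G.deleteEdges {s(a, b)}) A = mmVal G A := by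
  unfold mmVal
  congr 1
  ext n
  constructor
  · rintro ⟨M, h1, h2, rfl⟩
    exact ⟨M, fun p hp => ⟨(h1 p hp).1, (h1 p hp).2.1,
      (SimpleGraph.deleteEdges_adj.1 (h1 p hp).2.2).1⟩, h2, rfl⟩
  · rintro ⟨M, h1, h2, rfl⟩
    by_cases habM : (a, b) ∈ M
    · exact matching_transfer G a b c hab hdeg A M h1 h2 habM
    by_cases hbaM : (b, a) ∈ M
    · have hdeg' : G.neighborSet c = {b, a} := by rw [hdeg, Set.pair_comm]
      obtain ⟨M', u1, u2, u3⟩ :=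
        matching_transfer G b a c hab.symm hdeg' A M h1 h2 hbaM
      rw [show s(b, a) = s(a, b) from Sym2.eq_swap] at u1
      exact ⟨M', u1, u2, u3⟩
    · refine ⟨M, fun p hp => ⟨(h1 p hp).1, (h1 p hp).2.1, ?_⟩, h2, rfl⟩
      rw [SimpleGraph.deleteEdges_adj]
      refine ⟨(h1 p hp).2.2, ?_⟩
      intro h
      rw [Set.mem_singleton_iff, Sym2.eq_iff] at h
      rcases h with ⟨h1', h2'⟩ | ⟨h1', h2'⟩
      · exact habM ((Prod.ext_iff.mpr ⟨h1', h2'⟩ : p = (a, b)) ▸ hp)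
      · exact hbaM ((Prod.ext_iff.mpr ⟨h1', h2'⟩ : p = (b, a)) ▸ hp)

/-- for a degree-2 vertex `c` with adjacent neighbors `a, b`, deleting `ab`
preserves mm-width at least 3. -/
theorem mmw_deleteEdge_ge_three (V : Type) [Finite V] (G : SimpleGraph V) (a b c : V)
    (hab : G.Adj a b) (hdeg : G.neighborSet c = {a, b}) (h3 : 3 ≤ mmw G) :
    3 ≤ mmw (G.deleteEdges {s(a, b)}) := by
  have key : ∀ A : Set V, mmVal (G.deleteEdges {s(a, b)}) A = mmVal G A :=
    mmVal_deleteEdge_eq G a b c hab hdeg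
  have hmmw : mmw (G.deleteEdges {s(a, b)}) = mmw G := by
    unfold mmw
    congr 1
    ext k
    constructor
    · rintro ⟨D, hD⟩
      refine ⟨⟨D.B, D.finB, D.T, D.isTree, D.subcubic, D.L⟩, fun u w huw => ?_⟩
      have h := hD u w huw
      rw [key] at h
      exact h
    · rintro ⟨D, hD⟩
      refine ⟨⟨D.B, D.finB, D.T, D.isTree, D.subcubic, D.L⟩, fun u w huw => ?_⟩
      have h := hD u w huw
      rw [← key] at h
      exact h
  rw [hmmw]
  exact h3
end
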